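/- arXiv:1407.2199 — 2 statements merged into one kernel-verified Lean document; each statement's English description precedes it below -/
import Mathlib

section
/- Let (G,p) be an r-dimensional bar framework on n nodes in general position in ℝ^r, with r ≤ n−2. If (G,p) is universally rigid, then the graph G is (r+1)-vertex connected. -/
open Matrix

/-- A configuration `p` in `ℝ^r` is `r`-dimensional if its points affinely span `ℝ^r`. -/
def IsRDimensional {n r : ℕ} (p : Fin n → EuclideanSpace ℝ (Fin r)) : Prop :=
  affineSpan ℝ (Set.range p) = ⊤

/-- A configuration is in general position in `ℝ^r` if every `r+1` of its points are
affinely independent. -/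
def InGeneralPosition {n r : ℕ} (p : Fin n → EuclideanSpace ℝ (Fin r)) : Prop :=
  ∀ s : Finset (Fin n), s.card = r + 1 → AffineIndependent ℝ (fun i : s => p i)

/-- `(G, q)` is equivalent to `(G, p)`: corresponding edge lengths agree. -/
def FrameworkEquiv {n r r' : ℕ} (G : SimpleGraph (Fin n))
    (p : Fin n → EuclideanSpace ℝ (Fin r)) (q : Fin n → EuclideanSpace ℝ (Fin r')) : Prop :=
  ∀ i j : Fin n, G.Adj i j → ‖q i - q j‖ = ‖p i - p j‖

/-- Two configurations are congruent: all pairwise distances agree. -/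
def FrameworkCongruent {n r r' : ℕ} (p : Fin n → EuclideanSpace ℝ (Fin r))
    (q : Fin n → EuclideanSpace ℝ (Fin r')) : Prop :=
  ∀ i j : Fin n, ‖q i - q j‖ = ‖p i - p j‖

/-- `(G, p)` is universally rigid. -/
def UniversallyRigid {n r : ℕ} (G : SimpleGraph (Fin n))
    (p : Fin n → EuclideanSpace ℝ (Fin r)) : Prop :=
  ∀ r' : ℕ, 1 ≤ r' → r' ≤ n - 1 → ∀ q : Fin n → EuclideanSpace ℝ (Fin r'),
    IsRDimensional q → FrameworkEquiv G p q → FrameworkCongruent p q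

/-- `G` is `k`-vertex connected. -/
def IsKConnected {n : ℕ} (G : SimpleGraph (Fin n)) (k : ℕ) : Prop :=
  (n = k + 1 ∧ G = ⊤) ∨
  (k + 2 ≤ n ∧ ∀ S : Finset (Fin n), S.card = k - 1 →
    (G.induce ((↑S : Set (Fin n))ᶜ)).Connected)

/-- The configuration matrix of `p`. -/
def configMatrix {n r : ℕ} (p : Fin n → EuclideanSpace ℝ (Fin r)) : Matrix (Fin n) (Fin r) ℝ :=
  Matrix.of fun i k => p i k

/-- `Ω` is a stress matrix of `(G, p)`. -/
def IsStressMatrix {n r : ℕ} (G : SimpleGraph (Fin n)) (p : Fin n → EuclideanSpace ℝ (Fin r))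
    (Ω : Matrix (Fin n) (Fin n) ℝ) : Prop :=
  Ω.IsSymm ∧ (∀ i j : Fin n, i ≠ j → ¬ G.Adj i j → Ω i j = 0) ∧
  Ω * configMatrix p = 0 ∧ Ω *ᵥ (fun _ => (1 : ℝ)) = 0

/-- The matrix `[Pᵀ; eᵀ]` obtained by stacking `Pᵀ` on top of the all-ones row `eᵀ`. -/
def galeStack {n r : ℕ} (p : Fin n → EuclideanSpace ℝ (Fin r)) :
    Matrix (Fin r ⊕ Unit) (Fin n) ℝ :=
  Matrix.fromRows (Matrix.of fun k i => p i k) (Matrix.of fun _ _ => (1 : ℝ))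

/-- `Z` is a Gale matrix of `p`: its columns form a basis of the null space of `[Pᵀ; eᵀ]`. -/
def IsGaleMatrix {n r : ℕ} (p : Fin n → EuclideanSpace ℝ (Fin r))
    (Z : Matrix (Fin n) (Fin (n - r - 1)) ℝ) : Prop :=
  LinearIndependent ℝ (fun j : Fin (n - r - 1) => fun i => Z i j) ∧
  Submodule.span ℝ (Set.range (fun j : Fin (n - r - 1) => fun i => Z i j)) =
    LinearMap.ker (galeStack p).mulVecLin

/-!
If some `r` vertices `S` separate `a` from `b`, reflect the side of the separation containing
`a` in the hyperplane spanned by `p(S)`. Edges stay inside one side or end in `S`, which the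
reflection fixes, so all bar lengths are kept; the points of `S` together with `b` still span
`ℝ^r`. By general position neither `p a` nor `p b` lies on that hyperplane, so the distance between
them changes and `(G, p)` is not universally rigid. For `r = 0` all points coincide, and the side of
`a` is moved to a second point of the line instead.
-/

open scoped RealInnerProductSpace

namespace SimpleGraph

variable {V : Type*} {G : SimpleGraph V}

def Separates (G : SimpleGraph V) (S : Set V) (a b : V) : Prop :=
  ∃ A : Set V, a ∈ A ∧ b ∉ A ∧ b ∉ S ∧ Disjoint A S ∧ ∀ i ∈ A, ∀ j, G.Adj i j → j ∈ A ∨ j ∈ S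

theorem separates_compl_pair {a b : V} (hab : a ≠ b) (h : ¬ G.Adj a b) :
    G.Separates {a, b}ᶜ a b := by
  refine ⟨{a}, rfl, hab.symm, by simp, by simp, ?_⟩
  rintro i rfl j hij
  right
  simp only [Set.mem_compl_iff, Set.mem_insert_iff, Set.mem_singleton_iff, not_or]
  exact ⟨hij.ne', fun hjb => h (hjb ▸ hij)⟩

theorem separates_of_not_reachable {S : Set V} {u v : ↥Sᶜ}
    (h : ¬ (G.induce Sᶜ).Reachable u v) : G.Separates S u v := by
  refine ⟨Subtype.val '' {w | (G.induce Sᶜ).Reachable u w}, ⟨u, Reachable.refl _, rfl⟩, ?_,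
    v.2, ?_, ?_⟩
  · rintro ⟨w, hw, hwv⟩
    exact h (Subtype.ext hwv ▸ hw)
  · exact Set.disjoint_left.mpr fun _ ⟨w, _, hw⟩ => hw ▸ w.2
  · rintro _ ⟨w, hw, rfl⟩ j hwj
    by_cases hj : j ∈ S
    · exact Or.inr hj
    · exact Or.inl ⟨⟨j, hj⟩, hw.trans (induce_adj.mpr hwj).reachable, rfl⟩

end SimpleGraph

theorem isKConnected_succ_of_forall_not_separates {n k : ℕ} (hkn : k + 2 ≤ n)
    (G : SimpleGraph (Fin n))
    (h : ∀ S : Finset (Fin n), S.card = k → ∀ a b, ¬ G.Separates S a b) :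
    IsKConnected G (k + 1) := by
  classical
  rcases hkn.eq_or_lt with heq | hlt
  · refine Or.inl ⟨heq.symm, ?_⟩
    ext i j
    refine ⟨SimpleGraph.Adj.ne, fun hij => by_contra fun hadj => h {i, j}ᶜ ?_ i j ?_⟩
    · rw [Finset.card_compl, Finset.card_pair hij, Fintype.card_fin]
      omega
    · rw [Finset.coe_compl, Finset.coe_pair]
      exact SimpleGraph.separates_compl_pair hij hadj
  · refine Or.inr ⟨hlt, fun S hS => ?_⟩
    obtain ⟨x, -, hx⟩ := Finset.exists_mem_notMem_of_card_lt_card (s := S) (t := Finset.univ)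
      (by rw [Finset.card_univ, Fintype.card_fin]; omega)
    have : Nonempty ↥(↑S : Set (Fin n))ᶜ := ⟨⟨x, hx⟩⟩
    exact ⟨fun u v => by_contra fun huv =>
      h S (by simpa using hS) u v (SimpleGraph.separates_of_not_reachable huv)⟩

section Reflection

variable {E : Type*} [NormedAddCommGroup E] [InnerProductSpace ℝ E]

theorem AffineSubspace.exists_unit_normal [FiniteDimensional ℝ E] (s : AffineSubspace ℝ E)
    (hs : Module.finrank ℝ s.direction + 1 = Module.finrank ℝ E) {z : E} (hz : z ∈ s) :
    ∃ u : E, ‖u‖ = 1 ∧ ∀ x, x ∈ s ↔ ⟪x - z, u⟫ = 0 := by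
  have hperp : Module.finrank ℝ s.directionᗮ = 1 := by
    have := s.direction.finrank_add_finrank_orthogonal
    omega
  obtain ⟨v, hv, hv0⟩ := Submodule.exists_mem_ne_zero_of_ne_bot
    (Submodule.one_le_finrank_iff.mp hperp.ge)
  set u := ‖v‖⁻¹ • v
  have hu0 : u ≠ 0 := smul_ne_zero (inv_ne_zero (norm_ne_zero_iff.mpr hv0)) hv0
  have hspan : ℝ ∙ u = s.directionᗮ :=
    Submodule.eq_of_le_of_finrank_eq
      ((Submodule.span_singleton_le_iff_mem _ _).mpr (Submodule.smul_mem _ _ hv))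
      (by rw [finrank_span_singleton hu0, hperp])
  refine ⟨u, norm_smul_inv_norm hv0, fun x => ?_⟩
  rw [← AffineSubspace.vsub_right_mem_direction_iff_mem hz, ← s.direction.orthogonal_orthogonal,
    ← hspan, Submodule.mem_orthogonal_singleton_iff_inner_left, vsub_eq_sub]

variable (z u : E)

def hyperplaneReflection (x : E) : E := x - (2 * ⟪x - z, u⟫) • u

variable {z u}

theorem norm_hyperplaneReflection_sub_sq (hu : ‖u‖ = 1) (x y : E) :
    ‖hyperplaneReflection z u x - y‖ ^ 2 = ‖x - y‖ ^ 2 + 4 * ⟪x - z, u⟫ * ⟪y - z, u⟫ := by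
  have hxy : ⟪x - y, u⟫ = ⟪x - z, u⟫ - ⟪y - z, u⟫ := by
    rw [← inner_sub_left, sub_sub_sub_cancel_right]
  rw [hyperplaneReflection, sub_right_comm, norm_sub_sq_real, real_inner_smul_right, norm_smul,
    Real.norm_eq_abs, hu, mul_one, sq_abs, hxy]
  ring

theorem inner_hyperplaneReflection_sub (hu : ‖u‖ = 1) (x : E) :
    ⟪hyperplaneReflection z u x - z, u⟫ = -⟪x - z, u⟫ := by
  rw [hyperplaneReflection, sub_right_comm, inner_sub_left, real_inner_smul_left,
    real_inner_self_eq_norm_sq, hu]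
  ring

theorem isometry_hyperplaneReflection (hu : ‖u‖ = 1) :
    Isometry (hyperplaneReflection z u) := by
  refine Isometry.of_dist_eq fun x y => ?_
  rw [dist_eq_norm, dist_eq_norm, ← sq_eq_sq₀ (norm_nonneg _) (norm_nonneg _),
    norm_hyperplaneReflection_sub_sq hu, inner_hyperplaneReflection_sub hu, norm_sub_rev x,
    norm_hyperplaneReflection_sub_sq hu, norm_sub_rev y]
  ring

theorem hyperplaneReflection_of_inner_eq_zero {x : E} (hx : ⟪x - z, u⟫ = 0) :
    hyperplaneReflection z u x = x := by
  simp [hyperplaneReflection, hx]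

theorem norm_hyperplaneReflection_sub_ne (hu : ‖u‖ = 1) {x y : E} (hx : ⟪x - z, u⟫ ≠ 0)
    (hy : ⟪y - z, u⟫ ≠ 0) : ‖hyperplaneReflection z u x - y‖ ≠ ‖x - y‖ := by
  intro h
  have := norm_hyperplaneReflection_sub_sq (z := z) hu x y
  rw [h] at this
  exact mul_ne_zero hx hy (by linarith)

end Reflection

def Finset.embeddingInsert {α : Type*} [DecidableEq α] (S : Finset α) (x : α) :
    S ↪ (insert x S : Finset α) :=
  ⟨fun i => ⟨i, Finset.mem_insert_of_mem i.2⟩, fun _ _ h => Subtype.ext (Subtype.mk.inj h)⟩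

section GeneralPosition

variable {n r : ℕ} {p : Fin n → EuclideanSpace ℝ (Fin r)} {S : Finset (Fin n)} {x : Fin n}

theorem InGeneralPosition.affineIndependent_insert (hgen : InGeneralPosition p)
    (hS : S.card = r) (hx : x ∉ S) :
    AffineIndependent ℝ (fun i : (insert x S : Finset _) => p i) :=
  hgen _ (by rw [Finset.card_insert_of_notMem hx, hS])

theorem InGeneralPosition.mem_affineSpan_image_iff (hgen : InGeneralPosition p)
    (hS : S.card = r) (i : Fin n) : p i ∈ affineSpan ℝ (p '' S) ↔ i ∈ S := by
  refine ⟨fun hi => by_contra fun hiS => ?_, fun hi => subset_affineSpan ℝ _ ⟨i, hi, rfl⟩⟩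
  have himage : p '' S =
      (fun j : (insert i S : Finset _) => p j) '' Set.range (S.embeddingInsert i) := by
    rw [← Set.range_comp, Set.image_eq_range]
    rfl
  rw [himage, (hgen.affineIndependent_insert hS hiS).mem_affineSpan_iff
    ⟨i, Finset.mem_insert_self i S⟩] at hi
  obtain ⟨⟨j, hjS⟩, hj⟩ := hi
  exact hiS ((Subtype.mk.inj hj : j = i) ▸ hjS)

theorem InGeneralPosition.finrank_vectorSpan_image (hgen : InGeneralPosition p) (hr : 1 ≤ r)
    (hS : S.card = r) (hx : x ∉ S) : Module.finrank ℝ (vectorSpan ℝ (p '' S)) = r - 1 := by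
  have := ((hgen.affineIndependent_insert hS hx).comp_embedding
    (S.embeddingInsert x)).finrank_vectorSpan (n := r - 1) (by rw [Fintype.card_coe]; omega)
  rwa [Set.image_eq_range]

theorem InGeneralPosition.exists_unit_normal (hgen : InGeneralPosition p) (hr : 1 ≤ r)
    (hS : S.card = r) (hx : x ∉ S) :
    ∃ z u : EuclideanSpace ℝ (Fin r), ‖u‖ = 1 ∧ ∀ i, ⟪p i - z, u⟫ = 0 ↔ i ∈ S := by
  obtain ⟨z₀, hz₀⟩ := Finset.card_pos.mp (hS ▸ hr)
  obtain ⟨u, hu, hplane⟩ := (affineSpan ℝ (p '' S)).exists_unit_normal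
    (by rw [direction_affineSpan, hgen.finrank_vectorSpan_image hr hS hx,
      finrank_euclideanSpace_fin]; omega)
    (subset_affineSpan ℝ _ ⟨z₀, hz₀, rfl⟩)
  exact ⟨p z₀, u, hu, fun i => by rw [← hplane, hgen.mem_affineSpan_image_iff hS]⟩

end GeneralPosition

section Frameworks

variable {n r : ℕ}

theorem isRDimensional_of_affineIndependent {ι : Type*} [Fintype ι]
    {q : Fin n → EuclideanSpace ℝ (Fin r)} (g : ι → Fin n) (hind : AffineIndependent ℝ (q ∘ g))
    (hcard : Fintype.card ι = r + 1) : IsRDimensional q := by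
  have htop := (hind.affineSpan_eq_top_iff_card_eq_finrank_add_one).mpr
    (by rw [hcard, finrank_euclideanSpace_fin])
  exact eq_top_iff.mpr (htop ▸ affineSpan_mono ℝ (Set.range_comp_subset_range g q))

theorem frameworkEquiv_ite {G : SimpleGraph (Fin n)} {p : Fin n → EuclideanSpace ℝ (Fin r)}
    {f : EuclideanSpace ℝ (Fin r) → EuclideanSpace ℝ (Fin r)} (hf : Isometry f)
    {A S : Set (Fin n)} [DecidablePred (· ∈ A)] (hfix : ∀ j ∈ S, f (p j) = p j)
    (hA : ∀ i ∈ A, ∀ j, G.Adj i j → j ∈ A ∨ j ∈ S) :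
    FrameworkEquiv G p (fun i => if i ∈ A then f (p i) else p i) := by
  have hfnorm : ∀ x y, ‖f x - f y‖ = ‖x - y‖ := fun x y => by
    rw [← dist_eq_norm, ← dist_eq_norm, hf.dist_eq]
  intro i j hij
  by_cases hi : i ∈ A <;> by_cases hj : j ∈ A <;> simp only [hi, hj, if_true, if_false]
  · exact hfnorm _ _
  · nth_rw 1 [← hfix j ((hA i hi j hij).resolve_left hj)]
    exact hfnorm _ _
  · nth_rw 1 [← hfix i ((hA j hj i hij.symm).resolve_left hi)]
    exact hfnorm _ _

theorem not_universallyRigid_of_separates {G : SimpleGraph (Fin n)}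
    {p : Fin n → EuclideanSpace ℝ (Fin r)} (hr : 1 ≤ r) (hgen : InGeneralPosition p)
    {S : Finset (Fin n)} (hS : S.card = r) {a b : Fin n} (hsep : G.Separates S a b) :
    ¬ UniversallyRigid G p := by
  classical
  obtain ⟨A, haA, hbA, hbS, hAS, hA⟩ := hsep
  have haS : a ∉ S := Set.disjoint_left.mp hAS haA
  obtain ⟨z, u, hu, hplane⟩ := hgen.exists_unit_normal hr hS hbS
  set q := fun i => if i ∈ A then hyperplaneReflection z u (p i) else p i
  have hequiv : FrameworkEquiv G p q := frameworkEquiv_ite (isometry_hyperplaneReflection hu)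
    (fun j hj => hyperplaneReflection_of_inner_eq_zero ((hplane j).mpr hj)) hA
  have hdim : IsRDimensional q := by
    refine isRDimensional_of_affineIndependent (Subtype.val : ↥(insert b S) → Fin n) ?_
      (by rw [Fintype.card_coe, Finset.card_insert_of_notMem hbS, hS])
    convert hgen.affineIndependent_insert hS hbS using 1
    funext ⟨i, hi⟩
    have hiA : i ∉ A := by
      rcases Finset.mem_insert.mp hi with rfl | hiS
      exacts [hbA, Set.disjoint_right.mp hAS hiS]
    exact if_neg hiA
  have hrn : r ≤ n - 1 := by
    have := Finset.card_lt_univ_of_notMem hbS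
    rw [Fintype.card_fin] at this
    omega
  intro hur
  have hab := hur r hr hrn q hdim hequiv a b
  simp only [q, if_pos haA, if_neg hbA] at hab
  exact norm_hyperplaneReflection_sub_ne hu (mt (hplane a).mp haS) (mt (hplane b).mp hbS) hab

theorem not_universallyRigid_of_separates_empty {G : SimpleGraph (Fin n)}
    (p : Fin n → EuclideanSpace ℝ (Fin 0)) {a b : Fin n} (hsep : G.Separates ∅ a b) :
    ¬ UniversallyRigid G p := by
  classical
  obtain ⟨A, haA, hbA, -, -, hA⟩ := hsep
  set e : EuclideanSpace ℝ (Fin 1) := EuclideanSpace.single 0 1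
  have he : e ≠ 0 := by simp [e]
  set q : Fin n → EuclideanSpace ℝ (Fin 1) := fun i => if i ∈ A then e else 0
  have hequiv : FrameworkEquiv G p q := by
    intro i j hij
    have hij' : i ∈ A ↔ j ∈ A :=
      ⟨fun hi => (hA i hi j hij).resolve_right (Set.notMem_empty j),
        fun hj => (hA j hj i hij.symm).resolve_right (Set.notMem_empty i)⟩
    simp [q, hij', Subsingleton.elim (p i) (p j)]
  have hdim : IsRDimensional q := by
    refine isRDimensional_of_affineIndependent ![a, b] ?_ (by simp)
    have hpair : q ∘ ![a, b] = ![q a, q b] := by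
      funext i
      fin_cases i <;> rfl
    rw [hpair]
    exact affineIndependent_of_ne ℝ (by simpa [q, haA, hbA] using he)
  have hn : 1 ≤ n - 1 := by
    have := Fin.val_injective.ne (ne_of_mem_of_not_mem haA hbA)
    omega
  intro hur
  have hab := hur 1 le_rfl hn q hdim hequiv a b
  simp [q, haA, hbA, Subsingleton.elim (p a) (p b), he] at hab

end Frameworks

theorem kConnected_of_universally_rigid_general_position_general
    (n r : ℕ) (hrn : r + 2 ≤ n) (G : SimpleGraph (Fin n))
    (p : Fin n → EuclideanSpace ℝ (Fin r))
    (hgen : InGeneralPosition p)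
    (hur : UniversallyRigid G p) :
    IsKConnected G (r + 1) := by
  refine isKConnected_succ_of_forall_not_separates hrn G fun S hS a b hsep => ?_
  rcases Nat.eq_zero_or_pos r with rfl | hr
  · rw [Finset.card_eq_zero.mp hS, Finset.coe_empty] at hsep
    exact not_universallyRigid_of_separates_empty p hsep hur
  · exact not_universallyRigid_of_separates hr hgen hS hsep hur

/-- If `(G, p)` is an `r`-dimensional bar framework on `n` nodes in general position in `ℝ^r`,
`r ≤ n - 2`, and `(G, p)` is universally rigid, then `G` is `(r+1)`-vertex connected. -/
theorem kConnected_of_universally_rigid_general_position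
    (n r : ℕ) (hrn : r + 2 ≤ n) (G : SimpleGraph (Fin n))
    (p : Fin n → EuclideanSpace ℝ (Fin r))
    (hdim : IsRDimensional p) (hgen : InGeneralPosition p)
    (hur : UniversallyRigid G p) :
    IsKConnected G (r + 1) :=
  kConnected_of_universally_rigid_general_position_general n r hrn G p hgen hur
end

section
/- Let G be a simple graph on n nodes, 1 ≤ r ≤ n−2, and let x^1,…,x^n ∈ ℝ^{n−r−1} be an orthogonal representation of G such that every subset of {x^1,…,x^n} of size n−r−1 is linearly independent. Let ξ ∈ ℝ^n satisfy X^T ξ = 0 with all ξ_i ≠ 0, where X^T is the matrix with columns x^1,…,x^n; set Z = Diag(ξ) X, and let p be the r-dimensional configuration in ℝ^r whose configuration matrix P is an n×r matrix whose columns form a basis of the null space of the matrix stacking Z^T on top of e^T. Then Ω = Z Z^T = Diag(ξ) X X^T Diag(ξ) is a positive semidefinite stress matrix of the framework (G,p) of rank n−r−1. -/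
open Matrix

/-!
`Ω = Z Zᵀ` is a Gram matrix, hence positive semidefinite, and `Ω i j = ξ i ξ j (x^i · x^j)`
vanishes on non-edges. The columns of `P` lie in `ker Zᵀ` by construction and so does `e`,
since `Zᵀ e = Xᵀ ξ = 0`; hence `Ω P = 0` and `Ω e = 0`. Finally
`rank Ω = rank Z = rank X` because `Diag(ξ)` is invertible, and `X` has `n - r - 1` linearly
independent rows.
-/

namespace Matrix

variable {m n ι R : Type*}

theorem rank_eq_card_width_of_linearIndependent_rows [Field R] [Fintype n] [Fintype ι]
    (X : Matrix m n R) {f : ι → m} (hf : LinearIndependent R fun i => X (f i))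
    (hcard : Fintype.card ι = Fintype.card n) : X.rank = Fintype.card n :=
  le_antisymm X.rank_le_card_width <|
    hcard ▸ (hf.rank_matrix (M := X.submatrix f id)).symm.trans_le (X.rank_submatrix_le f id)

theorem mul_eq_zero_of_cols_mem_ker_fromRows [CommRing R] [Fintype m] {l₁ l₂ : Type*}
    (A : Matrix l₁ m R) (B : Matrix l₂ m R) (P : Matrix m n R)
    (hP : ∀ c, (fun i => P i c) ∈ LinearMap.ker (fromRows A B).mulVecLin) : A * P = 0 := by
  ext j c
  have h := congrFun (hP c) (Sum.inl j)
  simp only [mulVecLin_apply, fromRows_mulVec, Sum.elim_inl] at h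
  exact h

section DiagonalMul

variable [CommRing R] [Fintype m] [DecidableEq m] (ξ : m → R) (X : Matrix m n R)

theorem diagonal_mul_dotProduct_diagonal_mul [Fintype n] (i j : m) :
    (diagonal ξ * X) i ⬝ᵥ (diagonal ξ * X) j = ξ i * ξ j * (X i ⬝ᵥ X j) := by
  have hrow : ∀ i, (diagonal ξ * X) i = ξ i • X i := fun i => by ext c; simp [diagonal_mul]
  rw [hrow, hrow, smul_dotProduct, dotProduct_smul, smul_eq_mul, smul_eq_mul]
  ring

theorem diagonal_mul_mul_transpose [Fintype n] :
    diagonal ξ * X * (diagonal ξ * X)ᵀ = diagonal ξ * X * Xᵀ * diagonal ξ := by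
  rw [transpose_mul, diagonal_transpose]
  simp only [Matrix.mul_assoc]

theorem transpose_diagonal_mul_mulVec_one : (diagonal ξ * X)ᵀ *ᵥ (fun _ => 1) = Xᵀ *ᵥ ξ := by
  rw [transpose_mul, diagonal_transpose, ← mulVec_mulVec]
  congr 1
  ext i
  simp [mulVec_diagonal]

end DiagonalMul

end Matrix

theorem isStressMatrix_mul_transpose {n r : ℕ} {k : Type*} [Fintype k]
    (G : SimpleGraph (Fin n)) (p : Fin n → EuclideanSpace ℝ (Fin r)) (Z : Matrix (Fin n) k ℝ)
    (horth : ∀ i j, i ≠ j → ¬ G.Adj i j → Z i ⬝ᵥ Z j = 0)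
    (hp : Zᵀ * configMatrix p = 0) (he : Zᵀ *ᵥ (fun _ => 1) = 0) :
    IsStressMatrix G p (Z * Zᵀ) :=
  ⟨by rw [IsSymm, transpose_mul, transpose_transpose], horth,
    by rw [Matrix.mul_assoc, hp, Matrix.mul_zero], by rw [← mulVec_mulVec, he, mulVec_zero]⟩

theorem psd_stress_matrix_from_orthogonal_representation_general
    (n r : ℕ) (G : SimpleGraph (Fin n))
    (X : Matrix (Fin n) (Fin (n - r - 1)) ℝ)
    (horth : ∀ i j : Fin n, i ≠ j → ¬ G.Adj i j → X i ⬝ᵥ X j = 0)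
    (hgen : ∀ s : Finset (Fin n), s.card = n - r - 1 →
      LinearIndependent ℝ (fun i : s => X i))
    (ξ : Fin n → ℝ) (hξ0 : Xᵀ *ᵥ ξ = 0) (hξ : ∀ i : Fin n, ξ i ≠ 0)
    (Z : Matrix (Fin n) (Fin (n - r - 1)) ℝ) (hZ : Z = Matrix.diagonal ξ * X)
    (P : Matrix (Fin n) (Fin r) ℝ)
    (hPspan : Submodule.span ℝ (Set.range (fun k : Fin r => fun i => P i k)) =
      LinearMap.ker
        (Matrix.fromRows Zᵀ (Matrix.of fun (_ : Unit) (_ : Fin n) => (1 : ℝ))).mulVecLin)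
    (p : Fin n → EuclideanSpace ℝ (Fin r)) (hp : ∀ i k, p i k = P i k) :
    Z * Zᵀ = Matrix.diagonal ξ * X * Xᵀ * Matrix.diagonal ξ ∧
    IsStressMatrix G p (Z * Zᵀ) ∧ (Z * Zᵀ).PosSemidef ∧ (Z * Zᵀ).rank = n - r - 1 := by
  subst hZ
  have hZP : (diagonal ξ * X)ᵀ * configMatrix p = 0 := by
    have hpP : configMatrix p = P := by ext i k; exact hp i k
    rw [hpP]
    exact mul_eq_zero_of_cols_mem_ker_fromRows _ _ P fun c =>
      hPspan ▸ Submodule.subset_span (Set.mem_range_self c)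
  have hZorth : ∀ i j, i ≠ j → ¬ G.Adj i j →
      (diagonal ξ * X) i ⬝ᵥ (diagonal ξ * X) j = 0 := fun i j hij hadj => by
    rw [diagonal_mul_dotProduct_diagonal_mul, horth i j hij hadj, mul_zero]
  have hdet : (diagonal ξ).det ≠ 0 := by
    simpa [det_diagonal, Finset.prod_ne_zero_iff] using hξ
  have hrankX : X.rank = n - r - 1 := by
    obtain ⟨s, -, hs⟩ := Finset.exists_subset_card_eq
      (show n - r - 1 ≤ (Finset.univ : Finset (Fin n)).card by simp; omega)
    rw [X.rank_eq_card_width_of_linearIndependent_rows (hgen s hs) (by simp [hs]),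
      Fintype.card_fin]
  refine ⟨diagonal_mul_mul_transpose ξ X,
    isStressMatrix_mul_transpose G p _ hZorth hZP (by rw [transpose_diagonal_mul_mulVec_one, hξ0]),
    by simpa only [conjTranspose_eq_transpose_of_trivial]
      using posSemidef_self_mul_conjTranspose (diagonal ξ * X),
    by rw [rank_self_mul_transpose, rank_mul_eq_right_of_det_ne_zero _ _ hdet, hrankX]⟩

/-- The final step of the proof of Theorem 1.1: given an orthogonal representation
`x¹, …, xⁿ` (the rows of `X`) of `G` in `ℝ^{n-r-1}` with every `n - r - 1` of the vectors
linearly independent, `ξ` with `Xᵀ ξ = 0` and all entries nonzero, `Z = Diag(ξ) X`, and `p`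
the configuration whose configuration matrix `P` has columns forming a basis of the null space
of `[Zᵀ; eᵀ]`, the matrix `Ω = Z Zᵀ = Diag(ξ) X Xᵀ Diag(ξ)` is a positive semidefinite stress
matrix of `(G, p)` of rank `n - r - 1`. -/
theorem psd_stress_matrix_from_orthogonal_representation
    (n r : ℕ) (hr : 1 ≤ r) (hrn : r + 2 ≤ n) (G : SimpleGraph (Fin n))
    (X : Matrix (Fin n) (Fin (n - r - 1)) ℝ)
    (horth : ∀ i j : Fin n, i ≠ j → ¬ G.Adj i j → X i ⬝ᵥ X j = 0)
    (hgen : ∀ s : Finset (Fin n), s.card = n - r - 1 →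
      LinearIndependent ℝ (fun i : s => X i))
    (ξ : Fin n → ℝ) (hξ0 : Xᵀ *ᵥ ξ = 0) (hξ : ∀ i : Fin n, ξ i ≠ 0)
    (Z : Matrix (Fin n) (Fin (n - r - 1)) ℝ) (hZ : Z = Matrix.diagonal ξ * X)
    (P : Matrix (Fin n) (Fin r) ℝ)
    (hPindep : LinearIndependent ℝ (fun k : Fin r => fun i => P i k))
    (hPspan : Submodule.span ℝ (Set.range (fun k : Fin r => fun i => P i k)) =
      LinearMap.ker
        (Matrix.fromRows Zᵀ (Matrix.of fun (_ : Unit) (_ : Fin n) => (1 : ℝ))).mulVecLin)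
    (p : Fin n → EuclideanSpace ℝ (Fin r)) (hp : ∀ i k, p i k = P i k) :
    Z * Zᵀ = Matrix.diagonal ξ * X * Xᵀ * Matrix.diagonal ξ ∧
    IsStressMatrix G p (Z * Zᵀ) ∧ (Z * Zᵀ).PosSemidef ∧ (Z * Zᵀ).rank = n - r - 1 :=
  psd_stress_matrix_from_orthogonal_representation_general n r G X horth hgen ξ hξ0 hξ Z hZ P hPspan
    p hp
end
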